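/- Let L ≥ 2, n ≥ 2, 0 ≤ t ≤ n−1, 1 ≤ g ≤ L−1 with gL^t ≤ ⌊L^n/2⌋. Then for every m with gL^t ≤ m ≤ ⌊L^n/2⌋, ξ_m(K_L^n) ≥ ξ_{gL^t}(K_L^n) = g[(L−1)(n−t) − (g−1)]L^t. -/

import Mathlib

/-- The base-`L` digit of `m` at position `j`, as an integer. -/
def dig (L m j : ℕ) : ℤ := ((Nat.digits L m).getD j 0 : ℤ)

/-- `ex_m(K_L^n)`: twice the maximum number of edges of an induced subgraph on `m`
vertices of the Hamming graph `K_L^n`, given by the explicit base-`L` formula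
(it does not depend on `n`). -/
def exm (L m : ℕ) : ℤ :=
  (∑ j ∈ Finset.range (Nat.digits L m).length,
    (((L : ℤ) - 1) * dig L m j * j * (L : ℤ) ^ j + (dig L m j - 1) * dig L m j * (L : ℤ) ^ j))
  + 2 * ∑ j ∈ Finset.range (Nat.digits L m).length, ∑ j' ∈ Finset.range j,
      dig L m j * dig L m j' * (L : ℤ) ^ j'

/-- `ξ_m(K_L^n) = (L-1) n m - ex_m(K_L^n)`. -/
def xi (L n m : ℕ) : ℤ := ((L : ℤ) - 1) * n * m - exm L m

/-!
Write `m = a * L ^ s + r` with top digit `0 < a < L` and `r < L ^ s`. The base-`L` formula gives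
`ξ(m) = ξ(r) + ξ(a L^s) - 2 a r`, and induction on `s` gives `ξ(r) ≥ (L - 1)(n - s) r`. The cross
term `2 a r` is absorbed by this bound, since `2 m ≤ L ^ n` forces `2 a < L` when `s = n - 1` and
`r > 0`; hence `ξ(m) ≥ ξ(a L^s)`. Finally `ξ(a L^s)` is monotone in `(s, a)` ordered
lexicographically, as long as `a L^s ≤ L^n / 2`, which yields `ξ(m) ≥ ξ(g L^t)`.
-/

open Finset

lemma Nat.sum_range_div_pow_mod_mul_pow (L m N : ℕ) :
    ∑ j ∈ range N, m / L ^ j % L * L ^ j = m % L ^ N := by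
  induction N with
  | zero => simp [Nat.mod_one]
  | succ N ih => rw [sum_range_succ, ih, Nat.mod_pow_succ, mul_comm]

lemma div_pow_lt {L m s : ℕ} (hL : 0 < L) (hm : m < L ^ (s + 1)) : m / L ^ s < L := by
  rw [Nat.div_lt_iff_lt_mul (by positivity), ← pow_succ']
  exact hm

lemma exists_mul_pow_add {L m : ℕ} (hL : 1 < L) (hm : 0 < m) :
    ∃ s a r, 0 < a ∧ a < L ∧ r < L ^ s ∧ a * L ^ s + r = m := by
  set s := Nat.log L m
  have hpow : L ^ s ≤ m := Nat.pow_log_le_self L hm.ne'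
  exact ⟨s, m / L ^ s, m % L ^ s, Nat.div_pos hpow (by positivity),
    div_pow_lt (by omega) (Nat.lt_pow_succ_log_self hL m), Nat.mod_lt _ (by positivity),
    Nat.div_add_mod' m _⟩

lemma lt_or_eq_and_le_of_mul_pow_le {L g t a r s : ℕ} (hL : 0 < L) (hg : 1 ≤ g) (ha : a < L)
    (hr : r < L ^ s) (h : g * L ^ t ≤ a * L ^ s + r) : t < s ∨ t = s ∧ g ≤ a := by
  have hlt : g * L ^ t < (a + 1) * L ^ s := by linarith
  rcases lt_trichotomy t s with hts | rfl | hst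
  · exact Or.inl hts
  · exact Or.inr ⟨rfl, Nat.lt_succ_iff.1 (Nat.lt_of_mul_lt_mul_right hlt)⟩
  · have : (a + 1) * L ^ s ≤ L ^ t :=
      calc (a + 1) * L ^ s ≤ L ^ (s + 1) := by rw [pow_succ']; exact Nat.mul_le_mul_right _ ha
        _ ≤ L ^ t := Nat.pow_le_pow_right hL hst
    linarith [Nat.le_mul_of_pos_left (L ^ t) hg]

lemma two_mul_le_of_two_mul_mul_add_le {a r P L : ℕ} (hP : 0 < P) (h : 2 * (a * P + r) ≤ L * P) :
    2 * a ≤ L :=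
  Nat.le_of_mul_le_mul_right (by linarith) hP

lemma two_mul_lt_of_two_mul_mul_add_le {a r P L : ℕ} (hr : 0 < r) (h : 2 * (a * P + r) ≤ L * P) :
    2 * a < L :=
  Nat.lt_of_mul_lt_mul_right (a := P) (by linarith)

/-- With `P = L ^ s`, `ξ(a P + r) - (L - 1)(n - s - 1)(a P + r)` equals
`ξ(r) - (L - 1)(n - s) r + a P (L - a) + r (L - 1 - 2 a)`; this lemma is the inductive step of
`le_xi_of_lt_pow`. -/
lemma mul_mul_sub_add_mul_sub_nonneg {a r P L : ℤ} (ha : 0 ≤ a) (haL : a < L) (hr : 0 ≤ r)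
    (hrP : r < P) : 0 ≤ a * P * (L - a) + r * (L - 1 - 2 * a) := by
  rcases le_or_gt (2 * a) (L - 1) with h | h
  · have : 0 ≤ a * P * (L - a) := mul_nonneg (mul_nonneg ha (by linarith)) (by linarith)
    nlinarith
  · nlinarith [mul_nonneg (mul_nonneg (by linarith : (0 : ℤ) ≤ P) (by linarith : 0 ≤ a + 1))
      (by linarith : 0 ≤ L - 1 - a)]

def exSum (L : ℕ) (d : ℕ → ℤ) (N : ℕ) : ℤ :=
  (∑ j ∈ range N, (((L : ℤ) - 1) * d j * j * (L : ℤ) ^ j + (d j - 1) * d j * (L : ℤ) ^ j))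
  + 2 * ∑ j ∈ range N, ∑ j' ∈ range j, d j * d j' * (L : ℤ) ^ j'

section exSum

variable {L N : ℕ} {d d' : ℕ → ℤ}

lemma exSum_congr (h : ∀ j < N, d j = d' j) : exSum L d N = exSum L d' N := by
  unfold exSum
  congr 1
  · exact sum_congr rfl fun j hj => by rw [h j (mem_range.1 hj)]
  · congr 1
    refine sum_congr rfl fun j hj => sum_congr rfl fun j' hj' => ?_
    rw [h j (mem_range.1 hj), h j' ((mem_range.1 hj').trans (mem_range.1 hj))]

lemma exSum_eq_of_le {M : ℕ} (hd : ∀ j ≥ N, d j = 0) (hNM : N ≤ M) :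
    exSum L d M = exSum L d N := by
  unfold exSum
  rw [eventually_constant_sum (fun j hj => by simp [hd j hj]) hNM,
    eventually_constant_sum (fun j hj => by simp [hd j hj]) hNM]

lemma exSum_succ : exSum L d (N + 1) = exSum L d N
    + (((L : ℤ) - 1) * d N * N * (L : ℤ) ^ N + (d N - 1) * d N * (L : ℤ) ^ N)
    + 2 * d N * ∑ j ∈ range N, d j * (L : ℤ) ^ j := by
  simp only [exSum, sum_range_succ _ N, mul_assoc (d N), ← mul_sum]
  ring

end exSum

section dig

variable {L : ℕ} (hL : 2 ≤ L)
include hL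

lemma dig_eq_div_pow_mod (m j : ℕ) : dig L m j = ((m / L ^ j % L : ℕ) : ℤ) := by
  rw [dig, Nat.getD_digits _ _ hL]

lemma sum_dig_mul_pow {m N : ℕ} (h : m < L ^ N) :
    ∑ j ∈ range N, dig L m j * (L : ℤ) ^ j = m := by
  simp only [dig_eq_div_pow_mod hL]
  exact_mod_cast (Nat.sum_range_div_pow_mod_mul_pow L m N).trans (Nat.mod_eq_of_lt h)

lemma exm_eq_exSum {m N : ℕ} (h : m < L ^ N) : exm L m = exSum L (dig L m) N := by
  have hlen : (Nat.digits L m).length ≤ N := (Nat.digits_length_le_iff hL m).2 h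
  refine (exSum_eq_of_le (fun j hj => ?_) hlen).symm
  rw [dig, List.getD_eq_default _ _ hj, Nat.cast_zero]

lemma dig_mul_pow_add_of_lt {a r s j : ℕ} (hj : j < s) :
    dig L (a * L ^ s + r) j = dig L r j := by
  obtain ⟨k, rfl⟩ := Nat.exists_eq_add_of_lt hj
  have hpos : 0 < L ^ j := by positivity
  have : a * L ^ (j + k + 1) + r = r + L ^ j * (L * (a * L ^ k)) := by ring
  rw [dig_eq_div_pow_mod hL, dig_eq_div_pow_mod hL, this, Nat.add_mul_div_left _ _ hpos,
    Nat.add_mul_mod_self_left]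

lemma dig_mul_pow_add_self {a r s : ℕ} (ha : a < L) (hr : r < L ^ s) :
    dig L (a * L ^ s + r) s = a := by
  have hpos : 0 < L ^ s := by positivity
  rw [dig_eq_div_pow_mod hL, add_comm, mul_comm, Nat.add_mul_div_left _ _ hpos,
    Nat.div_eq_of_lt hr, zero_add, Nat.mod_eq_of_lt ha]

lemma exm_mul_pow_add {a r s : ℕ} (ha : a < L) (hr : r < L ^ s) :
    exm L (a * L ^ s + r) = exm L r + ((L : ℤ) - 1) * a * s * (L : ℤ) ^ s
      + ((a : ℤ) - 1) * a * (L : ℤ) ^ s + 2 * a * r := by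
  have hm : a * L ^ s + r < L ^ (s + 1) := by
    calc a * L ^ s + r < (a + 1) * L ^ s := by linarith
      _ ≤ L ^ (s + 1) := by rw [pow_succ']; exact Nat.mul_le_mul_right _ ha
  have hlow : ∀ j < s, dig L (a * L ^ s + r) j = dig L r j := fun j hj =>
    dig_mul_pow_add_of_lt hL hj
  rw [exm_eq_exSum hL hm, exSum_succ, exSum_congr hlow, ← exm_eq_exSum hL hr,
    dig_mul_pow_add_self hL ha hr, sum_congr rfl fun j hj => by rw [hlow j (mem_range.1 hj)],
    sum_dig_mul_pow hL hr]
  ring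

end dig

section xi

variable {L n : ℕ}

lemma xi_zero : xi L n 0 = 0 := by
  simp [xi, exm]

variable (hL : 2 ≤ L)
include hL

lemma xi_mul_pow_add {a r s : ℕ} (ha : a < L) (hr : r < L ^ s) :
    xi L n (a * L ^ s + r) = xi L n r
      + a * (((L : ℤ) - 1) * ((n : ℤ) - s) - ((a : ℤ) - 1)) * (L : ℤ) ^ s - 2 * a * r := by
  simp only [xi, exm_mul_pow_add hL ha hr]
  push_cast
  ring

lemma xi_mul_pow {a s : ℕ} (ha : a < L) :
    xi L n (a * L ^ s) = a * (((L : ℤ) - 1) * ((n : ℤ) - s) - ((a : ℤ) - 1)) * (L : ℤ) ^ s := by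
  simpa [xi_zero] using xi_mul_pow_add (n := n) hL ha (r := 0) (by positivity)

lemma le_xi_of_lt_pow {s r : ℕ} (hr : r < L ^ s) :
    ((L : ℤ) - 1) * ((n : ℤ) - s) * r ≤ xi L n r := by
  induction s generalizing r with
  | zero => simp [Nat.lt_one_iff.1 (by simpa using hr), xi_zero]
  | succ s ih =>
    obtain ⟨a, r', ha, hr', rfl⟩ : ∃ a r', a < L ∧ r' < L ^ s ∧ a * L ^ s + r' = r :=
      ⟨r / L ^ s, r % L ^ s, div_pow_lt (by omega) hr, Nat.mod_lt _ (by positivity), Nat.div_add_mod' r _⟩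
    have hslack := mul_mul_sub_add_mul_sub_nonneg (a := a) (r := r') (P := (L : ℤ) ^ s) (L := L)
      (by positivity) (by exact_mod_cast ha) (by positivity) (by exact_mod_cast hr')
    rw [xi_mul_pow_add hL ha hr']
    push_cast
    linarith [ih hr']

lemma xi_mul_pow_le_xi_mul_pow_add {a r s : ℕ} (ha : a < L) (hr : r < L ^ s) (hsn : s < n)
    (h2m : 2 * (a * L ^ s + r) ≤ L ^ n) : xi L n (a * L ^ s) ≤ xi L n (a * L ^ s + r) := by
  have hcross : 2 * (a : ℤ) * r ≤ ((L : ℤ) - 1) * ((n : ℤ) - s) * r := by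
    rcases Nat.eq_zero_or_pos r with rfl | hr0
    · simp
    refine mul_le_mul_of_nonneg_right ?_ (by positivity)
    rcases (by omega : s + 2 ≤ n ∨ n = s + 1) with hsn | rfl
    · have : (2 : ℤ) ≤ (n : ℤ) - s := by omega
      have : (a : ℤ) + 1 ≤ L := by exact_mod_cast ha
      nlinarith
    · have := two_mul_lt_of_two_mul_mul_add_le hr0 (h2m.trans_eq (pow_succ' L s))
      push_cast
      omega
  rw [xi_mul_pow_add hL ha hr, xi_mul_pow hL ha]
  linarith [le_xi_of_lt_pow (n := n) hL hr]

lemma xi_mul_pow_le_mul_pow {g a t : ℕ} (hga : g ≤ a) (ha : a < L)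
    (hsum : (a : ℤ) + g ≤ ((L : ℤ) - 1) * ((n : ℤ) - t) + 1) :
    xi L n (g * L ^ t) ≤ xi L n (a * L ^ t) := by
  rw [xi_mul_pow hL (hga.trans_lt ha), xi_mul_pow hL ha]
  have hga' : (g : ℤ) ≤ a := by exact_mod_cast hga
  nlinarith [mul_nonneg (mul_nonneg (sub_nonneg.2 hga') (sub_nonneg.2 hsum))
    (by positivity : (0 : ℤ) ≤ (L : ℤ) ^ t)]

lemma xi_mul_pow_le_pow_succ {g t : ℕ} (hg : g < L) (htn : t + 2 ≤ n) :
    xi L n (g * L ^ t) ≤ xi L n (L ^ (t + 1)) := by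
  have hnt : (2 : ℤ) ≤ (n : ℤ) - t := by omega
  have hL1 : (1 : ℤ) ≤ (L : ℤ) - 1 := by omega
  calc xi L n (g * L ^ t) ≤ xi L n ((L - 1) * L ^ t) := by
        refine xi_mul_pow_le_mul_pow hL (by omega) (by omega) ?_
        push_cast [show 1 ≤ L by omega]
        have : (g : ℤ) + 1 ≤ L := by exact_mod_cast hg
        nlinarith
    _ ≤ xi L n (1 * L ^ (t + 1)) := by
        rw [xi_mul_pow hL (by omega), xi_mul_pow hL (by omega)]
        push_cast [show 1 ≤ L by omega, pow_succ]
        nlinarith [mul_nonneg (mul_nonneg (by linarith : (0 : ℤ) ≤ (L : ℤ) - 1)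
          (by linarith : (0 : ℤ) ≤ (n : ℤ) - t - 2)) (by positivity : (0 : ℤ) ≤ (L : ℤ) ^ t)]
    _ = xi L n (L ^ (t + 1)) := by rw [one_mul]

lemma xi_pow_le_mul_pow {a s : ℕ} (ha0 : 1 ≤ a) (ha : a < L) (hsn : s < n) :
    xi L n (L ^ s) ≤ xi L n (a * L ^ s) := by
  have hns : (1 : ℤ) ≤ (n : ℤ) - s := by omega
  have : (a : ℤ) + 1 ≤ L := by exact_mod_cast ha
  simpa using xi_mul_pow_le_mul_pow (n := n) hL ha0 ha (by push_cast; nlinarith)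

lemma xi_mul_pow_le_pow_of_lt {g t s : ℕ} (hg : g < L) (hts : t < s) (hsn : s < n) :
    xi L n (g * L ^ t) ≤ xi L n (L ^ s) := by
  induction s, hts using Nat.le_induction with
  | base => exact xi_mul_pow_le_pow_succ hL hg (by omega)
  | succ s _ ih =>
    exact (ih (by omega)).trans (by simpa using xi_mul_pow_le_pow_succ (g := 1) hL (by omega) hsn)

lemma xi_mul_pow_le_mul_pow_of_lex {g t a s : ℕ} (hg : g < L) (ha0 : 1 ≤ a) (ha : a < L)
    (hsn : s < n) (hlex : t < s ∨ t = s ∧ g ≤ a) (htop : n = s + 1 → 2 * a ≤ L) :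
    xi L n (g * L ^ t) ≤ xi L n (a * L ^ s) := by
  rcases hlex with hts | ⟨rfl, hga⟩
  · exact (xi_mul_pow_le_pow_of_lt hL hg hts hsn).trans (xi_pow_le_mul_pow hL ha0 ha hsn)
  · refine xi_mul_pow_le_mul_pow hL hga ha ?_
    have : (a : ℤ) + 1 ≤ L := by exact_mod_cast ha
    rcases (by omega : t + 2 ≤ n ∨ n = t + 1) with htn | rfl
    · have : (2 : ℤ) ≤ (n : ℤ) - t := by omega
      nlinarith
    · have := htop rfl
      push_cast
      omega

end xi

theorem stmt7_general (L n t g : ℕ) (hL : 2 ≤ L) (hg1 : 1 ≤ g) (hg2 : g ≤ L - 1)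
    (m : ℕ) (hm1 : g * L ^ t ≤ m) (hm2 : m ≤ L ^ n / 2) :
    xi L n (g * L ^ t) ≤ xi L n m ∧
      xi L n (g * L ^ t)
        = (g : ℤ) * (((L : ℤ) - 1) * ((n : ℤ) - (t : ℤ)) - ((g : ℤ) - 1)) * (L : ℤ) ^ t := by
  have hgL : g < L := by omega
  refine ⟨?_, xi_mul_pow hL hgL⟩
  obtain ⟨s, a, r, ha0, haL, hr, rfl⟩ :=
    exists_mul_pow_add hL ((Nat.mul_pos hg1 (Nat.pow_pos (by omega))).trans_le hm1)
  have h2m : 2 * (a * L ^ s + r) ≤ L ^ n := by omega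
  have hsn : s < n := by
    have : L ^ s ≤ a * L ^ s := Nat.le_mul_of_pos_left _ ha0
    have : 0 < L ^ s := Nat.pow_pos (by omega)
    exact (Nat.pow_lt_pow_iff_right (by omega : 1 < L)).1 (by omega)
  have htop : n = s + 1 → 2 * a ≤ L := fun hn =>
    two_mul_le_of_two_mul_mul_add_le (r := r) (by positivity) (h2m.trans_eq (by rw [hn, pow_succ']))
  exact (xi_mul_pow_le_mul_pow_of_lex hL hgL ha0 haL hsn
    (lt_or_eq_and_le_of_mul_pow_le (by omega) hg1 haL hr hm1) htop).trans
    (xi_mul_pow_le_xi_mul_pow_add hL haL hr hsn h2m)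

theorem stmt7 (L n t g : ℕ) (hL : 2 ≤ L) (hn : 2 ≤ n) (ht : t ≤ n - 1)
    (hg1 : 1 ≤ g) (hg2 : g ≤ L - 1) (hgt : g * L ^ t ≤ L ^ n / 2)
    (m : ℕ) (hm1 : g * L ^ t ≤ m) (hm2 : m ≤ L ^ n / 2) :
    xi L n (g * L ^ t) ≤ xi L n m ∧
      xi L n (g * L ^ t)
        = (g : ℤ) * (((L : ℤ) - 1) * ((n : ℤ) - (t : ℤ)) - ((g : ℤ) - 1)) * (L : ℤ) ^ t :=
  stmt7_general L n t g hL hg1 hg2 m hm1 hm2
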